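/- arXiv:math/0609530 — 2 statements merged into one kernel-verified Lean document; each statement's English description precedes it below -/
import Mathlib

section
/- Let V be a finite-dimensional real vector space, let T_1, …, T_n be linearly independent elements of the dual space V*, and let Q be a quadratic form on V whose restriction to the subspace ⋂_{i=1}^n Ker(T_i) is not identically zero. Then Q, T_1, …, T_n are algebraically independent as functions on V: if F ∈ ℝ[z_0, z_1, …, z_n] is a polynomial such that the function V → ℝ given by v ↦ F(Q(v), T_1(v), …, T_n(v)) is identically zero, then F is the zero polynomial. -/
/-!
Fix `v₀ ∈ ⋂ ker Tᵢ` with `Q v₀ ≠ 0`. Linear independence makes `v ↦ (T₁ v, …, Tₙ v)` surjective,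
so every `x ∈ ℝⁿ` is `T w` for some `w`, and then `T (s v₀ + w) = x` for all `s` while
`Q (s v₀ + w)` is a non-constant quadratic in `s`. Hence for every `x` the one-variable polynomial
`F (·, x)` has infinitely many roots, so it vanishes, and `F` vanishes on all of `ℝⁿ⁺¹`.
-/

open Polynomial in
theorem Polynomial.infinite_range_eval_of_degree_pos {R : Type*} [CommRing R] [IsDomain R]
    [Infinite R] {q : R[X]} (hq : 0 < q.degree) : (Set.range fun s => q.eval s).Infinite := by
  intro hfin
  have hfibers : ∀ b ∈ Set.range (fun s => q.eval s), ((fun s => q.eval s) ⁻¹' {b}).Finite := by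
    intro b _
    have hne : q - C b ≠ 0 := ne_zero_of_degree_gt (degree_sub_C hq ▸ hq)
    simpa [Set.preimage, sub_eq_zero] using finite_setOfPred_isRoot hne
  exact Set.infinite_univ (by simpa using hfin.preimage' hfibers)

theorem QuadraticMap.apply_smul_add {R M : Type*} [CommRing R] [AddCommGroup M] [Module R M]
    (Q : QuadraticMap R M R) (s : R) (v w : M) :
    Q (s • v + w) = s * s * Q v + s * polar Q v w + Q w := by
  rw [QuadraticMap.map_add Q, QuadraticMap.map_smul, polar_smul_left, smul_eq_mul, smul_eq_mul]
  ring

open Polynomial in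
theorem QuadraticMap.infinite_range_smul_add {R M : Type*} [CommRing R] [IsDomain R] [Infinite R]
    [AddCommGroup M] [Module R M] (Q : QuadraticMap R M R) {v : M} (hv : Q v ≠ 0) (w : M) :
    (Set.range fun s : R => Q (s • v + w)).Infinite := by
  have hq : (C (Q v) * X ^ 2 + C (polar Q v w) * X + C (Q w)).degree = 2 := degree_quadratic hv
  convert infinite_range_eval_of_degree_pos (hq ▸ zero_lt_two) using 3 with s
  simp [Q.apply_smul_add]
  ring

theorem MvPolynomial.eq_zero_of_infinite_setOf_eval_cons_eq_zero {R : Type*} [CommRing R]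
    [IsDomain R] [Infinite R] {n : ℕ} {F : MvPolynomial (Fin (n + 1)) R}
    (h : ∀ x : Fin n → R, {t | eval (Fin.cons t x) F = 0}.Infinite) : F = 0 := by
  refine funext fun y => ?_
  have hfiber := Polynomial.eq_zero_of_infinite_isRoot _ <| by
    simpa only [eval_eq_eval_mv_eval', Polynomial.IsRoot] using h (Fin.tail y)
  rw [← Fin.cons_self_tail y, eval_eq_eval_mv_eval', hfiber, Polynomial.eval_zero, map_zero]

theorem LinearMap.surjective_pi_of_linearIndependent {K V ι : Type*} [Field K] [AddCommGroup V]
    [Module K V] [Finite ι] {T : ι → V →ₗ[K] K} (hT : LinearIndependent K T) :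
    Function.Surjective (LinearMap.pi T) := by
  classical
  have := Fintype.ofFinite ι
  rw [← dualMap_injective_iff, injective_iff_map_eq_zero]
  intro φ hφ
  set c : ι → K := fun i => φ fun j => if i = j then 1 else 0
  have hφ_apply (x : ι → K) : φ x = ∑ i, x i * c i := pi_apply_eq_sum_univ φ x
  have hcomb : ∑ i, c i • T i = 0 := by
    ext v
    simpa [hφ_apply, mul_comm] using LinearMap.congr_fun hφ v
  have hc := Fintype.linearIndependent_iff.1 hT c hcomb
  exact LinearMap.ext fun x => by simp [hφ_apply, hc]

theorem witten_stmt0_general (V : Type*) [AddCommGroup V] [Module ℝ V]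
    (n : ℕ) (T : Fin n → (V →ₗ[ℝ] ℝ)) (hT : LinearIndependent ℝ T)
    (Q : QuadraticForm ℝ V)
    (hQ : ∃ v ∈ ⨅ i, LinearMap.ker (T i), Q v ≠ 0)
    (F : MvPolynomial (Fin (n + 1)) ℝ)
    (hF : ∀ v : V, MvPolynomial.eval (Fin.cons (Q v) fun i => T i v) F = 0) :
    F = 0 := by
  obtain ⟨v₀, hv₀, hQv₀⟩ := hQ
  refine MvPolynomial.eq_zero_of_infinite_setOf_eval_cons_eq_zero fun x => ?_
  obtain ⟨w, rfl⟩ := LinearMap.surjective_pi_of_linearIndependent hT x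
  refine (Q.infinite_range_smul_add hQv₀ w).mono ?_
  rintro _ ⟨s, rfl⟩
  have hTv₀ (i : Fin n) : T i v₀ = 0 := (Submodule.mem_iInf _).1 hv₀ i
  have hFs := hF (s • v₀ + w)
  simp only [map_add, map_smul, hTv₀, smul_zero, zero_add] at hFs
  exact hFs

/-- **Lemma (Algebraic independence of linearly independent functionals and a quadratic
form).** Let `V` be a finite-dimensional real vector space, `T 0, …, T (n-1)` linearly
independent elements of the dual space, and `Q` a quadratic form on `V` which is not
identically zero on `⋂ i, ker (T i)`.  If `F ∈ ℝ[z_0, …, z_n]` satisfies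
`F (Q v, T 0 v, …, T (n-1) v) = 0` for all `v ∈ V`, then `F = 0`. -/
theorem witten_stmt0 (V : Type*) [AddCommGroup V] [Module ℝ V] [FiniteDimensional ℝ V]
    (n : ℕ) (T : Fin n → (V →ₗ[ℝ] ℝ)) (hT : LinearIndependent ℝ T)
    (Q : QuadraticForm ℝ V)
    (hQ : ∃ v ∈ ⨅ i, LinearMap.ker (T i), Q v ≠ 0)
    (F : MvPolynomial (Fin (n + 1)) ℝ)
    (hF : ∀ v : V, MvPolynomial.eval (Fin.cons (Q v) fun i => T i v) F = 0) :
    F = 0 :=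
  witten_stmt0_general V n T hT Q hQ F hF
end

section
/- Let V be a finite-dimensional real vector space with dim V ≥ 3, and let Q be a nondegenerate quadratic form on V that is indefinite, i.e. there exist vectors u, v ∈ V with Q(u) > 0 and Q(v) < 0. Let φ_1, …, φ_m be finitely many nonzero linear functionals on V. Then there exists h ∈ V with Q(h) = 0 and φ_j(h) ≠ 0 for every j = 1, …, m. In particular, the set Q^{-1}(0) \ ⋃_{j=1}^m Ker(φ_j) is non-empty. -/
/-!
Pick a nonzero isotropic vector `n` (it exists because `Q` is indefinite). For every `d` the vector
`Q(d) n - 2 B(n, d) d` is isotropic again, and `φ_j` of it is a quadratic function `f_j` of `d`.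
No `f_j` vanishes identically: if `φ_j n = 0` it is a product of the nonzero linear forms `B n` and
`φ_j`; otherwise `Q` would vanish on the hyperplane `n^⊥`, which is impossible for a nondegenerate
form in dimension `≥ 3`, as totally isotropic subspaces have dimension at most `dim V / 2`.
Over an infinite field the functions that are polynomial along every line form a ring without
zero divisors, so the product of the `f_j` does not vanish identically either.
-/

open Polynomial Module

section PolynomialAlongLines

variable {K V : Type*} [CommRing K] [AddCommGroup V] [Module K V]

variable (K V) in
def polynomialAlongLines : Subalgebra K (V → K) where
  carrier := {f | ∀ x y : V, ∃ p : K[X], ∀ t : K, p.eval t = f (x + t • y)}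
  mul_mem' {f g} hf hg x y := by
    obtain ⟨p, hp⟩ := hf x y
    obtain ⟨q, hq⟩ := hg x y
    exact ⟨p * q, fun t => by simp [hp, hq]⟩
  add_mem' {f g} hf hg x y := by
    obtain ⟨p, hp⟩ := hf x y
    obtain ⟨q, hq⟩ := hg x y
    exact ⟨p + q, fun t => by simp [hp, hq]⟩
  algebraMap_mem' c _ _ := ⟨C c, fun _ => by simp⟩

namespace polynomialAlongLines

theorem linearMap_mem (ℓ : V →ₗ[K] K) : ⇑ℓ ∈ polynomialAlongLines K V :=
  fun x y => ⟨C (ℓ x) + C (ℓ y) * X, fun t => by simp; ring⟩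

theorem apply_self_mem (B : V →ₗ[K] V →ₗ[K] K) :
    (fun x => B x x) ∈ polynomialAlongLines K V := fun x y =>
  ⟨C (B x x) + C (B x y + B y x) * X + C (B y y) * X ^ 2, fun t => by simp; ring⟩

variable [IsDomain K] [Infinite K]

theorem mul_ne_zero {f g : V → K} (hf : f ∈ polynomialAlongLines K V)
    (hg : g ∈ polynomialAlongLines K V) (hf0 : f ≠ 0) (hg0 : g ≠ 0) : f * g ≠ 0 := by
  obtain ⟨x, hx⟩ := Function.ne_iff.mp hf0
  obtain ⟨y, hy⟩ := Function.ne_iff.mp hg0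
  obtain ⟨p, hp⟩ := hf x (y - x)
  obtain ⟨q, hq⟩ := hg x (y - x)
  have hp0 : p ≠ 0 := fun h => hx (by simpa [h] using (hp 0).symm)
  have hq0 : q ≠ 0 := fun h => hy (by simpa [h] using (hq 1).symm)
  obtain ⟨t, ht⟩ : ∃ t, (p * q).eval t ≠ 0 := by
    by_contra! h
    exact _root_.mul_ne_zero hp0 hq0 (Polynomial.funext (by simpa using h))
  exact Function.ne_iff.mpr ⟨x + t • (y - x), by simpa [hp, hq] using ht⟩

instance : NoZeroDivisors (polynomialAlongLines K V) where
  eq_zero_or_eq_zero_of_mul_eq_zero {f g} hfg := by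
    by_contra! h
    exact mul_ne_zero f.2 g.2 (by simpa using h.1) (by simpa using h.2)
      (by simpa using congrArg Subtype.val hfg)

theorem exists_forall_ne_zero {ι : Type*} [Fintype ι] {f : ι → V → K}
    (hf : ∀ i, f i ∈ polynomialAlongLines K V) (hf0 : ∀ i, f i ≠ 0) : ∃ x, ∀ i, f i x ≠ 0 := by
  have : ∏ i, (⟨f i, hf i⟩ : polynomialAlongLines K V) ≠ 0 :=
    Finset.prod_ne_zero_iff.mpr fun i _ => by simpa [← Subtype.coe_ne_coe] using hf0 i
  obtain ⟨x, hx⟩ := Function.ne_iff.mp (by simpa [← Subtype.coe_ne_coe] using this)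
  exact ⟨x, by simpa [Finset.prod_ne_zero_iff] using hx⟩

end polynomialAlongLines

end PolynomialAlongLines

namespace LinearMap.BilinForm

section Field

variable {K V : Type*} [Field K] [AddCommGroup V] [Module K V] {B : LinearMap.BilinForm K V}

theorem le_orthogonal_of_forall_apply_self_eq_zero [NeZero (2 : K)] (hB : B.IsSymm)
    {W : Submodule K V} (hW : ∀ x ∈ W, B x x = 0) : W ≤ B.orthogonal W := by
  intro y hy x hx
  have hxy := hW (x + y) (W.add_mem hx hy)
  simp only [map_add, LinearMap.add_apply, hW x hx, hW y hy, hB.eq y x] at hxy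
  exact (mul_eq_zero.mp (by linear_combination hxy : (2 : K) * B x y = 0)).resolve_left two_ne_zero

theorem two_mul_finrank_le_of_le_orthogonal [FiniteDimensional K V] (hB : B.Nondegenerate)
    {W : Submodule K V} (hW : W ≤ B.orthogonal W) : 2 * finrank K W ≤ finrank K V := by
  have := Submodule.finrank_mono hW
  rw [finrank_orthogonal hB] at this
  have := W.finrank_le
  omega

theorem exists_apply_eq_zero_apply_self_ne_zero [NeZero (2 : K)] [FiniteDimensional K V]
    (hB : B.IsSymm) (hB' : B.Nondegenerate) (hV : 3 ≤ finrank K V) {n : V} (hn : n ≠ 0) :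
    ∃ d, B n d = 0 ∧ B d d ≠ 0 := by
  by_contra! h
  have hW := two_mul_finrank_le_of_le_orthogonal hB' <|
    le_orthogonal_of_forall_apply_self_eq_zero hB (W := B.orthogonal (K ∙ n)) fun d hd =>
      h d (hd n (Submodule.mem_span_singleton_self n))
  rw [finrank_orthogonal hB', finrank_span_singleton hn] at hW
  omega

/-- For isotropic `n`, this is (up to scaling) the second point where the line `n + K • d`
meets the null cone of `B`. -/
def conePoint (B : LinearMap.BilinForm K V) (n d : V) : V := B d d • n - (2 * B n d) • d

theorem conePoint_isotropic (hB : B.IsSymm) {n : V} (hn : B n n = 0) (d : V) :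
    B (B.conePoint n d) (B.conePoint n d) = 0 := by
  simp only [conePoint, map_sub, map_smul, LinearMap.sub_apply, LinearMap.smul_apply,
    smul_eq_mul, hn, hB.eq d n]
  ring

theorem apply_conePoint (ℓ : V →ₗ[K] K) (n d : V) :
    ℓ (B.conePoint n d) = B d d * ℓ n - 2 * B n d * ℓ d := by
  simp [conePoint]

theorem conePoint_comp_mem_polynomialAlongLines (ℓ : V →ₗ[K] K) (n : V) :
    (fun d => ℓ (B.conePoint n d)) ∈ polynomialAlongLines K V := by
  have : (fun d => ℓ (B.conePoint n d)) = ℓ n • (fun d => B d d) - (2 : K) • (⇑(B n) * ⇑ℓ) := by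
    ext d
    simp [apply_conePoint, mul_assoc, mul_comm (ℓ n)]
  rw [this]
  refine Subalgebra.sub_mem _ (Subalgebra.smul_mem _ ?_ _) (Subalgebra.smul_mem _ ?_ _)
  · exact polynomialAlongLines.apply_self_mem B
  · exact Subalgebra.mul_mem _ (polynomialAlongLines.linearMap_mem _)
      (polynomialAlongLines.linearMap_mem _)

theorem conePoint_comp_ne_zero [Infinite K] [NeZero (2 : K)] [FiniteDimensional K V]
    (hB : B.IsSymm) (hB' : B.Nondegenerate) (hV : 3 ≤ finrank K V) {n : V} (hn : n ≠ 0)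
    {ℓ : V →ₗ[K] K} (hℓ : ℓ ≠ 0) : (fun d => ℓ (B.conePoint n d)) ≠ 0 := by
  by_cases hℓn : ℓ n = 0
  · have hBn : ⇑(B n) ≠ 0 := fun h => hn (hB'.1 n fun w => congrFun h w)
    have : (fun d => ℓ (B.conePoint n d)) = (-2 : K) • (⇑(B n) * ⇑ℓ) := by
      ext d
      simp [apply_conePoint, hℓn, mul_assoc]
    rw [this]
    exact smul_ne_zero (by simpa using two_ne_zero) <|
      polynomialAlongLines.mul_ne_zero (polynomialAlongLines.linearMap_mem _)
        (polynomialAlongLines.linearMap_mem _) hBn (by simpa [DFunLike.coe_fn_eq] using hℓ)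
  · obtain ⟨d, hnd, hdd⟩ := exists_apply_eq_zero_apply_self_ne_zero hB hB' hV hn
    exact Function.ne_iff.mpr ⟨d, by simpa [apply_conePoint, hnd] using ⟨hdd, hℓn⟩⟩

end Field

variable {V : Type*} [AddCommGroup V] [Module ℝ V] in
theorem exists_ne_zero_apply_self_eq_zero {B : LinearMap.BilinForm ℝ V} {u v : V}
    (hu : 0 < B u u) (hv : B v v < 0) : ∃ n, n ≠ 0 ∧ B n n = 0 := by
  obtain ⟨t, ht⟩ := exists_quadratic_eq_zero (b := B u v + B v u) (c := B u u) hv.ne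
    ⟨√(discrim (B v v) (B u v + B v u) (B u u)), (Real.mul_self_sqrt (by
      rw [discrim]; nlinarith [sq_nonneg (B u v + B v u)])).symm⟩
  refine ⟨u + t • v, fun h => ?_, by simp; linear_combination ht⟩
  have : B u u = t ^ 2 * B v v := by
    rw [add_eq_zero_iff_eq_neg.mp h]
    simp
    ring
  nlinarith [sq_nonneg t]

end LinearMap.BilinForm

open LinearMap.BilinForm

/-- Let `V` be a finite-dimensional real vector space with `dim V ≥ 3`, and let `Q` be the
quadratic form `Q v = B v v` of a nondegenerate symmetric bilinear form `B` on `V` which is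
indefinite (takes both positive and negative values).  Then for any finitely many nonzero
linear functionals `φ 0, …, φ (m-1)` on `V` there exists `h ∈ V` with `Q h = 0` and
`φ j h ≠ 0` for every `j`; that is, `Q⁻¹(0) \ ⋃ j, ker (φ j)` is non-empty. -/
theorem witten_stmt7 (V : Type*) [AddCommGroup V] [Module ℝ V] [FiniteDimensional ℝ V]
    (hdim : 3 ≤ Module.finrank ℝ V)
    (B : V →ₗ[ℝ] V →ₗ[ℝ] ℝ) (hsymm : ∀ v w : V, B v w = B w v)
    (hnd : ∀ v : V, (∀ w : V, B v w = 0) → v = 0)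
    (hpos : ∃ u : V, 0 < B u u) (hneg : ∃ v : V, B v v < 0)
    (m : ℕ) (φ : Fin m → (V →ₗ[ℝ] ℝ)) (hφ : ∀ j, φ j ≠ 0) :
    ∃ h : V, B h h = 0 ∧ ∀ j, φ j h ≠ 0 := by
  have hB : IsSymm B := ⟨hsymm⟩
  have hB' : Nondegenerate B := hB.isRefl.nondegenerate_iff_separatingLeft.mpr hnd
  obtain ⟨u, hu⟩ := hpos
  obtain ⟨v, hv⟩ := hneg
  obtain ⟨n, hn0, hn⟩ := exists_ne_zero_apply_self_eq_zero hu hv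
  obtain ⟨d, hd⟩ := polynomialAlongLines.exists_forall_ne_zero
    (fun j => conePoint_comp_mem_polynomialAlongLines (B := B) (φ j) n)
    (fun j => conePoint_comp_ne_zero hB hB' hdim hn0 (hφ j))
  exact ⟨conePoint B n d, conePoint_isotropic hB hn d, hd⟩
end
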